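/- arXiv:1606.00709 — 7 statements merged into one kernel-verified Lean document; each statement's English description precedes it below -/
import Mathlib

section
/- Under the hypotheses of the variational lower bound, if f is differentiable at u₀ = p(x)/q(x) for μ-a.e. x, then choosing T*(x) = f'(p(x)/q(x)) makes the bound tight: ∫ p T* dμ − ∫ q f*(T*) dμ = D_f(P‖Q). -/
open MeasureTheory

/-- Tangent line inequality for a convex function differentiable at a point. -/
lemma tangent_le {f : ℝ → ℝ} (hf : ConvexOn ℝ (Set.Ici 0) f) {u₀ : ℝ} (hu₀ : 0 ≤ u₀)
    {d : ℝ} (hd : HasDerivAt f d u₀) {u : ℝ} (hu : 0 ≤ u) :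
    f u₀ + d * (u - u₀) ≤ f u := by
  rcases lt_trichotomy u u₀ with h | h | h
  · have := hf.slope_le_of_hasDerivAt hu hu₀ h hd
    rw [slope_def_field, div_le_iff₀ (by linarith)] at this
    nlinarith
  · simp [h]
  · have := hf.le_slope_of_hasDerivAt hu₀ hu h hd
    rw [slope_def_field, le_div_iff₀ (by linarith)] at this
    nlinarith

/-- Fenchel–Young equality: `fstar (f' u₀) = u₀ * f' u₀ - f u₀`. -/
lemma fstar_eq {f fstar : ℝ → ℝ} (hf : ConvexOn ℝ (Set.Ici 0) f)
    (hconj : ∀ t : ℝ, IsLUB {x : ℝ | ∃ u : ℝ, 0 ≤ u ∧ x = u * t - f u} (fstar t))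
    {u₀ : ℝ} (hu₀ : 0 ≤ u₀) {d : ℝ} (hd : HasDerivAt f d u₀) :
    fstar d = u₀ * d - f u₀ := by
  refine (hconj d).unique ⟨?_, ?_⟩
  · rintro x ⟨u, hu, rfl⟩
    have := tangent_le hf hu₀ hd hu
    nlinarith
  · intro b hb
    exact hb ⟨u₀, hu₀, rfl⟩

/-- Tightness of the variational lower bound: if `f` is differentiable at `p(x)/q(x)` for
a.e. `x`, then the choice `T*(x) = f'(p(x)/q(x))` achieves equality:
`∫ p T* dμ - ∫ q f*(T*) dμ = D_f(P‖Q)`. -/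
theorem f_divergence_variational_bound_tight {X : Type*} [MeasurableSpace X]
    (μ : Measure X) [SigmaFinite μ] (f f' fstar : ℝ → ℝ)
    (hf : ConvexOn ℝ (Set.Ici 0) f) (hlsc : LowerSemicontinuousOn f (Set.Ici 0))
    (hconj : ∀ t : ℝ, IsLUB {x : ℝ | ∃ u : ℝ, 0 ≤ u ∧ x = u * t - f u} (fstar t))
    (p q : X → ℝ)
    (hp0 : ∀ᵐ x ∂μ, 0 ≤ p x) (hq0 : ∀ᵐ x ∂μ, 0 < q x)
    (hpm : Measurable p) (hqm : Measurable q)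
    (hpi : Integrable p μ) (hqi : Integrable q μ)
    (hp1 : ∫ x, p x ∂μ = 1) (hq1 : ∫ x, q x ∂μ = 1)
    (hderiv : ∀ᵐ x ∂μ, HasDerivAt f (f' (p x / q x)) (p x / q x))
    (hInt1 : Integrable (fun x => p x * f' (p x / q x)) μ)
    (hInt2 : Integrable (fun x => q x * fstar (f' (p x / q x))) μ)
    (hInt3 : Integrable (fun x => q x * f (p x / q x)) μ) :
    ∫ x, p x * f' (p x / q x) ∂μ - ∫ x, q x * fstar (f' (p x / q x)) ∂μ
      = ∫ x, q x * f (p x / q x) ∂μ := by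
  rw [← integral_sub hInt1 hInt2]
  refine integral_congr_ae ?_
  filter_upwards [hp0, hq0, hderiv] with x hpx hqx hdx
  have hu : 0 ≤ p x / q x := div_nonneg hpx hqx.le
  have h := fstar_eq hf hconj hu hdx
  have hq : q x * (p x / q x) = p x := by field_simp
  rw [h, mul_sub, ← mul_assoc, hq]
  ring
end

section
/- The Fenchel conjugate of f(u) = −(u + 1) log((1 + u)/2) + u log u (for u > 0) is f*(t) = −log(2 − exp(t)) for t < log 2, and f*(t) = +∞ for t ≥ log 2. -/
private lemma js_key (u s : ℝ) (hu : 0 < u) (hs : 0 < s) (hs2 : s < 2) :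
    u * Real.log s + (u + 1) * Real.log ((1 + u) / 2) - u * Real.log u
      + Real.log (2 - s) ≤ 0 := by
  have h2s : 0 < 2 - s := by linarith
  have hA : (0:ℝ) < s * (1 + u) / (2 * u) := by positivity
  have hB : (0:ℝ) < (1 + u) * (2 - s) / 2 := by positivity
  have h1 : Real.log (s * (1 + u) / (2 * u)) ≤ s * (1 + u) / (2 * u) - 1 :=
    Real.log_le_sub_one_of_pos hA
  have h2 : Real.log ((1 + u) * (2 - s) / 2) ≤ (1 + u) * (2 - s) / 2 - 1 :=
    Real.log_le_sub_one_of_pos hB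
  have e1 : Real.log (s * (1 + u) / (2 * u))
      = Real.log s + Real.log ((1 + u) / 2) - Real.log u := by
    rw [show s * (1 + u) / (2 * u) = s * ((1 + u) / 2) / u by ring,
      Real.log_div (by positivity) hu.ne', Real.log_mul hs.ne' (by positivity)]
  have e2 : Real.log ((1 + u) * (2 - s) / 2)
      = Real.log ((1 + u) / 2) + Real.log (2 - s) := by
    rw [show (1 + u) * (2 - s) / 2 = ((1 + u) / 2) * (2 - s) by ring,
      Real.log_mul (by positivity) h2s.ne']
  have h1' : u * Real.log (s * (1 + u) / (2 * u)) ≤ u * (s * (1 + u) / (2 * u) - 1) :=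
    mul_le_mul_of_nonneg_left h1 hu.le
  have hc : u * (s * (1 + u) / (2 * u)) = s * (1 + u) / 2 := by
    field_simp
  rw [e1] at h1'
  rw [e2] at h2
  nlinarith [h1', h2, hc]

/-- The Fenchel conjugate of `f(u) = -(u+1) log ((1+u)/2) + u log u` (over `u > 0`) is
`f*(t) = - log (2 - exp t)` for `t < log 2` and `+∞` for `t ≥ log 2`. -/
theorem fenchel_conjugate_jensen_shannon (t : ℝ) :
    (t < Real.log 2 → IsLUB
      {x : ℝ | ∃ u : ℝ, 0 < u ∧
        x = u * t - (-(u + 1) * Real.log ((1 + u) / 2) + u * Real.log u)}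
      (-Real.log (2 - Real.exp t))) ∧
    (Real.log 2 ≤ t → ¬ BddAbove
      {x : ℝ | ∃ u : ℝ, 0 < u ∧
        x = u * t - (-(u + 1) * Real.log ((1 + u) / 2) + u * Real.log u)}) := by
  constructor
  · intro ht
    have hs2 : Real.exp t < 2 := by
      calc Real.exp t < Real.exp (Real.log 2) := Real.exp_lt_exp.mpr ht
        _ = 2 := Real.exp_log (by norm_num)
    have h2s : 0 < 2 - Real.exp t := by linarith
    constructor
    · rintro x ⟨u, hu, rfl⟩
      have := js_key u (Real.exp t) hu (Real.exp_pos t) hs2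
      rw [Real.log_exp] at this
      linarith
    · intro y hy
      -- the sup is attained at u₀ = exp t / (2 - exp t)
      set s := Real.exp t with hs
      set u₀ := s / (2 - s) with hu₀def
      have hu₀ : 0 < u₀ := div_pos (Real.exp_pos t) h2s
      apply hy
      refine ⟨u₀, hu₀, ?_⟩
      have e1 : (1 + u₀) / 2 = 1 / (2 - s) := by
        rw [hu₀def]; field_simp; ring
      have e2 : Real.log ((1 + u₀) / 2) = -Real.log (2 - s) := by
        rw [e1, one_div, Real.log_inv]
      have e3 : Real.log u₀ = t - Real.log (2 - s) := by
        rw [hu₀def, Real.log_div (Real.exp_ne_zero t) h2s.ne', Real.log_exp]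
      rw [e2, e3]; ring
  · intro ht hbdd
    obtain ⟨M, hM⟩ := hbdd
    set u := 2 * Real.exp (M + 1) with hudef
    have hu : 0 < u := by positivity
    have hmem : u * t - (-(u + 1) * Real.log ((1 + u) / 2) + u * Real.log u) ∈
        {x : ℝ | ∃ u : ℝ, 0 < u ∧
          x = u * t - (-(u + 1) * Real.log ((1 + u) / 2) + u * Real.log u)} :=
      ⟨u, hu, rfl⟩
    have hle := hM hmem
    have hL : Real.log u - Real.log 2 ≤ Real.log ((1 + u) / 2) := by
      rw [← Real.log_div hu.ne' two_ne_zero]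
      apply Real.log_le_log (by positivity)
      apply div_le_div_of_nonneg_right (by linarith) (by norm_num)
    have hlogu : Real.log u = Real.log 2 + (M + 1) := by
      rw [hudef, Real.log_mul two_ne_zero (Real.exp_ne_zero _), Real.log_exp]
    have h1 : u * Real.log 2 ≤ u * t := mul_le_mul_of_nonneg_left ht hu.le
    have h2 : (u + 1) * (Real.log u - Real.log 2) ≤ (u + 1) * Real.log ((1 + u) / 2) :=
      mul_le_mul_of_nonneg_left hL (by linarith)
    nlinarith [h1, h2, hlogu, hle]
end

section
/- The Fenchel conjugate of f(u) = (1 − u)²/u (for u > 0, +∞ otherwise) is f*(t) = 2 − 2√(1 − t) for t < 1 (with f*(1) = 2), and f*(t) = +∞ for t > 1. -/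
/-- The Fenchel conjugate of `f(u) = (1-u)^2 / u` (over `u > 0`) is
`f*(t) = 2 - 2 √(1 - t)` for `t ≤ 1` (in particular `f*(1) = 2`) and `+∞` for `t > 1`. -/
theorem fenchel_conjugate_neyman (t : ℝ) :
    (t ≤ 1 → IsLUB {x : ℝ | ∃ u : ℝ, 0 < u ∧ x = u * t - (1 - u) ^ 2 / u}
      (2 - 2 * Real.sqrt (1 - t))) ∧
    (1 < t → ¬ BddAbove {x : ℝ | ∃ u : ℝ, 0 < u ∧ x = u * t - (1 - u) ^ 2 / u}) := by
  constructor
  · intro ht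
    have hs0 : (0:ℝ) ≤ 1 - t := by linarith
    constructor
    · rintro x ⟨u, hu, rfl⟩
      have key : u * t - (1 - u) ^ 2 / u = 2 - ((1 - t) * u + 1 / u) := by
        field_simp; ring
      rw [key]
      have hsu := Real.sq_sqrt hs0
      have huu := Real.sq_sqrt hu.le
      have h1 : 0 < Real.sqrt u := Real.sqrt_pos.mpr hu
      have h2 : 2 * Real.sqrt (1 - t) ≤ (1 - t) * u + 1 / u := by
        have hsq := sq_nonneg (Real.sqrt (1 - t) * Real.sqrt u - 1 / Real.sqrt u)
        have hinv : (1 / Real.sqrt u) ^ 2 = 1 / u := by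
          rw [div_pow, one_pow, huu]
        have h3 : Real.sqrt u * (1 / Real.sqrt u) = 1 := mul_one_div_cancel h1.ne'
        have h4 : (Real.sqrt (1 - t)) ^ 2 * (Real.sqrt u) ^ 2 = (1 - t) * u := by
          rw [hsu, huu]
        have h5 : Real.sqrt (1 - t) * Real.sqrt u * (1 / Real.sqrt u) = Real.sqrt (1 - t) := by
          rw [mul_assoc, h3, mul_one]
        nlinarith [hsq, h4, h5, hinv]
      linarith
    · intro b hb
      rcases lt_or_eq_of_le ht with h | h
      · -- t < 1 : supremum attained at u = 1/√(1-t)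
        have hspos : (0:ℝ) < 1 - t := by linarith
        have hrs : 0 < Real.sqrt (1 - t) := Real.sqrt_pos.mpr hspos
        have hx : (2 - 2 * Real.sqrt (1 - t)) ∈
            {x : ℝ | ∃ u : ℝ, 0 < u ∧ x = u * t - (1 - u) ^ 2 / u} := by
          refine ⟨1 / Real.sqrt (1 - t), div_pos one_pos hrs, ?_⟩
          have hsu := Real.sq_sqrt hspos.le
          have hne : Real.sqrt (1 - t) ≠ 0 := ne_of_gt hrs
          field_simp
          nlinarith [hsu]
        exact hb hx
      · -- t = 1
        subst h
        by_contra hlt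
        push_neg at hlt
        have hs : Real.sqrt (1 - 1) = 0 := by simp
        rw [hs] at hlt
        have hb2 : b < 2 := by linarith
        set u : ℝ := 2 / (2 - b) with hu
        have hupos : 0 < u := div_pos two_pos (by linarith)
        have hmem : u * 1 - (1 - u) ^ 2 / u ∈
            {x : ℝ | ∃ v : ℝ, 0 < v ∧ x = v * 1 - (1 - v) ^ 2 / v} := ⟨u, hupos, rfl⟩
        have hval : u * 1 - (1 - u) ^ 2 / u = 2 - 1 / u := by
          field_simp; ring
        have hle := hb hmem
        rw [hval] at hle
        have : 1 / u = (2 - b) / 2 := by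
          rw [hu]; rw [one_div_div]
        rw [this] at hle
        linarith
  · intro ht ⟨b, hb⟩
    have htpos : 0 < t - 1 := by linarith
    set u : ℝ := max 1 ((|b| + 1) / (t - 1)) with hu
    have hu1 : (1:ℝ) ≤ u := le_max_left _ _
    have hupos : 0 < u := lt_of_lt_of_le one_pos hu1
    have hub : (|b| + 1) / (t - 1) ≤ u := le_max_right _ _
    have hub' : |b| + 1 ≤ (t - 1) * u := by
      rw [div_le_iff₀ htpos] at hub; linarith [hub]
    have hinv : 1 / u ≤ 1 := by
      rw [div_le_one hupos]; exact hu1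
    have hval : u * t - (1 - u) ^ 2 / u = 2 + (t - 1) * u - 1 / u := by
      field_simp; ring
    have hle := hb ⟨u, hupos, rfl⟩
    rw [hval] at hle
    have : b ≤ |b| := le_abs_self b
    linarith
end

section
/- For α ∈ ℝ with α ∉ {0, 1}, the Fenchel conjugate of f(u) = (u^α − 1 − α(u − 1))/(α(α − 1)) (for u > 0) satisfies f*(t) = (1/α)·(t(α − 1) + 1)^{α/(α−1)} − 1/α for t in the domain where t(α − 1) + 1 > 0 (for α < 1 the condition is t < 1/(1−α); for α > 1 the formula holds where t(α−1)+1 > 0). -/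
/-!
The maximiser is the stationary point `w = (t (α - 1) + 1)^(1/(α-1))`, where `f'(w) = t`.
Writing `u = w v`, the Fenchel–Young gap `f*(t) - (u t - f u)` equals `w^α f(v)`, and
`f ≥ 0` on `(0, ∞)` is Bernoulli's inequality `u^α ≥ 1 + α (u - 1)` (reversed for
`0 < α < 1`, where the denominator `α (α - 1)` is negative too). The gap vanishes at `v = 1`.
-/

noncomputable def alphaDivGen (α u : ℝ) : ℝ :=
  (u ^ α - 1 - α * (u - 1)) / (α * (α - 1))

lemma one_add_mul_sub_one_le_rpow_of_nonpos {x α : ℝ} (hx : 0 < x) (hα : α ≤ 0) :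
    1 + α * (x - 1) ≤ x ^ α := by
  have hexp : α * Real.log x + 1 ≤ x ^ α := by
    rw [Real.rpow_def_of_pos hx, mul_comm]
    exact Real.add_one_le_exp _
  nlinarith [Real.log_le_sub_one_of_pos hx]

lemma alphaDivGen_nonneg {α x : ℝ} (hα0 : α ≠ 0) (hα1 : α ≠ 1) (hx : 0 < x) :
    0 ≤ alphaDivGen α x := by
  have hx1 : -1 ≤ x - 1 := by linarith
  rcases hα0.lt_or_gt with hneg | hpos
  · have := one_add_mul_sub_one_le_rpow_of_nonpos hx hneg.le
    exact div_nonneg (by linarith) (by nlinarith)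
  rcases hα1.lt_or_gt with hlt | hgt
  · have := rpow_one_add_le_one_add_mul_self hx1 hpos.le hlt.le
    rw [add_sub_cancel] at this
    exact div_nonneg_of_nonpos (by linarith) (by nlinarith)
  · have := one_add_mul_self_le_rpow_one_add hx1 hgt.le
    rw [add_sub_cancel] at this
    exact div_nonneg (by linarith) (by nlinarith)

lemma alphaDivGen_one (α : ℝ) : alphaDivGen α 1 = 0 := by
  simp [alphaDivGen]

lemma conjugate_sub_eq_rpow_mul_alphaDivGen {α t u w : ℝ} (hα0 : α ≠ 0) (hα1 : α ≠ 1)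
    (hu : 0 < u) (hw : 0 < w) (hwt : w ^ (α - 1) = t * (α - 1) + 1) :
    1 / α * w ^ α - 1 / α - (u * t - alphaDivGen α u) = w ^ α * alphaDivGen α (u / w) := by
  have hα1' : α - 1 ≠ 0 := sub_ne_zero.2 hα1
  have hs : t * (α - 1) + 1 ≠ 0 := hwt ▸ (Real.rpow_pos_of_pos hw _).ne'
  have hwα : w ^ α = (t * (α - 1) + 1) * w := by
    rw [← hwt, Real.rpow_sub_one hw.ne', div_mul_cancel₀ _ hw.ne']
  rw [alphaDivGen, alphaDivGen, Real.div_rpow hu.le hw.le, hwα]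
  field_simp
  ring

/-- The Fenchel conjugate of the α-divergence generator
`f(u) = (u^α - 1 - α (u - 1)) / (α (α - 1))` (over `u > 0`), for `α ∉ {0, 1}` and
`t` with `t (α - 1) + 1 > 0`, is `f*(t) = (1/α) (t (α - 1) + 1)^(α/(α-1)) - 1/α`. -/
theorem fenchel_conjugate_alpha_div (α t : ℝ) (hα0 : α ≠ 0) (hα1 : α ≠ 1)
    (ht : 0 < t * (α - 1) + 1) :
    IsLUB {x : ℝ | ∃ u : ℝ, 0 < u ∧
        x = u * t - (u ^ α - 1 - α * (u - 1)) / (α * (α - 1))}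
      (1 / α * (t * (α - 1) + 1) ^ (α / (α - 1)) - 1 / α) := by
  have hα1' : α - 1 ≠ 0 := sub_ne_zero.2 hα1
  set w := (t * (α - 1) + 1) ^ (α - 1)⁻¹
  have hw : 0 < w := Real.rpow_pos_of_pos ht _
  have hwt : w ^ (α - 1) = t * (α - 1) + 1 := Real.rpow_inv_rpow ht.le hα1'
  have hvalue : (t * (α - 1) + 1) ^ (α / (α - 1)) = w ^ α := by
    rw [div_eq_inv_mul, Real.rpow_mul ht.le]
  have hgap (u : ℝ) (hu : 0 < u) := conjugate_sub_eq_rpow_mul_alphaDivGen hα0 hα1 hu hw hwt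
  rw [hvalue]
  refine IsGreatest.isLUB ⟨⟨w, hw, ?_⟩, ?_⟩
  · have hattained := hgap w hw
    rwa [div_self hw.ne', alphaDivGen_one, mul_zero, sub_eq_zero] at hattained
  · rintro _ ⟨u, hu, rfl⟩
    have hgap_nonneg :=
      mul_nonneg (Real.rpow_pos_of_pos hw α).le (alphaDivGen_nonneg hα0 hα1 (div_pos hu hw))
    rw [← hgap u hu] at hgap_nonneg
    exact sub_nonneg.1 hgap_nonneg
end

section
/- Let F : ℝ^n × ℝ^m → ℝ be twice continuously differentiable on a convex neighborhood U of a point π* = (θ*, ω*) with ∇F(π*) = 0, and suppose ∇²_θ F ⪰ δI and ∇²_ω F ⪯ −δI throughout U for some δ > 0. Define the signed gradient field ∇̃F(π) = (−∇_θ F, ∇_ω F) and J(π) = ½‖∇F(π)‖². Then for all π ∈ U: ⟨∇̃F(π), ∇J(π)⟩ ≤ −δ‖∇F(π)‖² = −2δ·J(π). -/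
open RealInnerProductSpace

/-- Descent property of the signed gradient field at a saddle objective: if `F` is `C²` on
a convex neighborhood `U` of a saddle point `πs` (with `∇F(πs) = 0`), with
`∇²_θ F ⪰ δ I` and `∇²_ω F ⪯ -δ I` throughout `U`, then for `J = ½‖∇F‖²` (whose gradient
is `∇J = ∇²F ∇F`) and the signed gradient field `∇̃F = (-∇_θ F, ∇_ω F)` we have
`⟨∇̃F(π), ∇J(π)⟩ ≤ -δ ‖∇F(π)‖² = -2δ J(π)` for all `π ∈ U`. -/
theorem signed_gradient_descent_property (n m : ℕ)
    (F : EuclideanSpace ℝ (Fin n ⊕ Fin m) → ℝ)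
    (U : Set (EuclideanSpace ℝ (Fin n ⊕ Fin m))) (hU : IsOpen U) (hUc : Convex ℝ U)
    (g : EuclideanSpace ℝ (Fin n ⊕ Fin m) → EuclideanSpace ℝ (Fin n ⊕ Fin m))
    (H : EuclideanSpace ℝ (Fin n ⊕ Fin m) →
      (EuclideanSpace ℝ (Fin n ⊕ Fin m) →L[ℝ] EuclideanSpace ℝ (Fin n ⊕ Fin m)))
    (δ : ℝ) (hδ : 0 < δ)
    (hF : ContDiffOn ℝ 2 F U)
    (hg : ∀ π ∈ U, HasGradientAt F (g π) π)
    (hH : ∀ π ∈ U, HasFDerivAt g (H π) π)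
    (πs : EuclideanSpace ℝ (Fin n ⊕ Fin m)) (hπs : πs ∈ U) (hcrit : g πs = 0)
    (hθ : ∀ π ∈ U, ∀ v : EuclideanSpace ℝ (Fin n ⊕ Fin m),
      (∀ i : Fin m, v (Sum.inr i) = 0) → δ * ‖v‖ ^ 2 ≤ ⟪H π v, v⟫)
    (hω : ∀ π ∈ U, ∀ v : EuclideanSpace ℝ (Fin n ⊕ Fin m),
      (∀ i : Fin n, v (Sum.inl i) = 0) → ⟪H π v, v⟫ ≤ -(δ * ‖v‖ ^ 2)) :
    ∀ π ∈ U,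
      ⟪(EuclideanSpace.equiv (Fin n ⊕ Fin m) ℝ).symm
          (Sum.elim (fun i => -(g π (Sum.inl i))) (fun i => g π (Sum.inr i))),
        H π (g π)⟫
        ≤ -(δ * ‖g π‖ ^ 2) ∧
      -(δ * ‖g π‖ ^ 2) = -(2 * δ * ((1 : ℝ) / 2 * ‖g π‖ ^ 2)) := by
  intro π hπ
  refine ⟨?_, by ring⟩
  have hsymm : ∀ v w : EuclideanSpace ℝ (Fin n ⊕ Fin m), ⟪H π v, w⟫ = ⟪H π w, v⟫ := by
    have hev : ∀ᶠ y in nhds π,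
        HasFDerivAt F ((InnerProductSpace.toDual ℝ (EuclideanSpace ℝ (Fin n ⊕ Fin m))) (g y)) y := by
      filter_upwards [hU.mem_nhds hπ] with y hy
      exact (hg y hy).hasFDerivAt
    have hd : HasFDerivAt
        (fun y => (InnerProductSpace.toDual ℝ (EuclideanSpace ℝ (Fin n ⊕ Fin m))) (g y))
        (((InnerProductSpace.toDual ℝ
            (EuclideanSpace ℝ (Fin n ⊕ Fin m))).toContinuousLinearMap).comp (H π)) π :=
      ((InnerProductSpace.toDual ℝ
          (EuclideanSpace ℝ (Fin n ⊕ Fin m))).toContinuousLinearMap).hasFDerivAt.comp π (hH π hπ)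
    intro v w
    have := second_derivative_symmetric_of_eventually hev hd v w
    simpa [InnerProductSpace.toDual_apply_apply] using this
  set a : EuclideanSpace ℝ (Fin n ⊕ Fin m) := (EuclideanSpace.equiv (Fin n ⊕ Fin m) ℝ).symm
      (Sum.elim (fun i => g π (Sum.inl i)) (fun _ => 0)) with ha
  set b : EuclideanSpace ℝ (Fin n ⊕ Fin m) := (EuclideanSpace.equiv (Fin n ⊕ Fin m) ℝ).symm
      (Sum.elim (fun _ => 0) (fun i => g π (Sum.inr i))) with hb
  have hab : g π = a + b := by
    ext i
    cases i <;> simp [ha, hb]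
  have hs : (EuclideanSpace.equiv (Fin n ⊕ Fin m) ℝ).symm
      (Sum.elim (fun i => -(g π (Sum.inl i))) (fun i => g π (Sum.inr i))) = b - a := by
    ext i
    cases i <;> simp [ha, hb]
  have hinner0 : ⟪a, b⟫ = 0 := by
    rw [PiLp.inner_apply, Fintype.sum_sum_type]
    simp [ha, hb]
  have hinner0' : ⟪b, a⟫ = 0 := by rw [real_inner_comm]; exact hinner0
  have hnorm : ‖g π‖ ^ 2 = ‖a‖ ^ 2 + ‖b‖ ^ 2 := by
    rw [hab, ← real_inner_self_eq_norm_sq, ← real_inner_self_eq_norm_sq,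
      ← real_inner_self_eq_norm_sq, inner_add_add_self, hinner0, hinner0']
    ring
  have hga : δ * ‖a‖ ^ 2 ≤ ⟪H π a, a⟫ := hθ π hπ a (fun i => by simp [ha])
  have hgb : ⟪H π b, b⟫ ≤ -(δ * ‖b‖ ^ 2) := hω π hπ b (fun i => by simp [hb])
  have hcross : ⟪b, H π a⟫ = ⟪a, H π b⟫ :=
    calc ⟪b, H π a⟫ = ⟪H π a, b⟫ := real_inner_comm _ _
      _ = ⟪H π b, a⟫ := hsymm a b
      _ = ⟪a, H π b⟫ := real_inner_comm _ _
  rw [hs, hab]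
  have hexp : ⟪b - a, H π (a + b)⟫ = ⟪H π b, b⟫ - ⟪H π a, a⟫
      + (⟪b, H π a⟫ - ⟪a, H π b⟫) := by
    rw [map_add, inner_sub_left, inner_add_right, inner_add_right,
      real_inner_comm b (H π b), real_inner_comm a (H π a)]
    ring
  have hnorm2 : ‖a + b‖ ^ 2 = ‖a‖ ^ 2 + ‖b‖ ^ 2 := by rw [← hab]; exact hnorm
  rw [hexp, hcross, hnorm2]
  linarith
end

section
/- Under the conditions of the previous statement, additionally assume J satisfies the smoothness bound J(π') ≤ J(π) + ⟨∇J(π), π' − π⟩ + (L/2)‖π' − π‖² for all π, π' in the neighborhood, with L > 0 and δ ≤ L. Then the single-step gradient iteration π^{t+1} = π^t + η∇̃F(π^t) with step size η = δ/L satisfies J(π^{t+1}) ≤ (1 − δ²/(2L)) J(π^t), and consequently J(π^t) ≤ (1 − δ²/(2L))^t J(π^0), i.e., the squared gradient norm decreases geometrically (assuming all iterates remain in the neighborhood). -/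
open RealInnerProductSpace Filter Topology

/-!
Split the gradient `v = ∇F = u + w` into its `θ`-part `u` and its `ω`-part `w`, so that
`∇̃F = w - u`. Symmetry of the Hessian `H` cancels the cross terms, and the curvature bounds give
the descent inequality `⟪H v, w - u⟫ = ⟪H w, w⟫ - ⟪H u, u⟫ ≤ -δ‖v‖²`. Plugging the step `η ∇̃F`,
with `‖∇̃F‖ = ‖∇F‖`, into the smoothness bound of `J` gives `J⁺ ≤ (1 - δ²/L) J`, stronger than
the factor `1 - δ²/(2L)` claimed.
-/

section Hessian

variable {E : Type*} [NormedAddCommGroup E] [InnerProductSpace ℝ E] [CompleteSpace E]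

theorem inner_hessian_comm_of_hasGradientAt {f : E → ℝ} {g : E → E} {H : E →L[ℝ] E} {x : E}
    (hg : ∀ᶠ y in 𝓝 x, HasGradientAt f (g y) y) (hH : HasFDerivAt g H x) (v w : E) :
    ⟪H v, w⟫ = ⟪H w, v⟫ := by
  have hf : ∀ᶠ y in 𝓝 x, HasFDerivAt f (InnerProductSpace.toDual ℝ E (g y)) y :=
    hg.mono fun y hy => hy.hasFDerivAt
  have hdual := (InnerProductSpace.toDual ℝ E).toContinuousLinearEquiv.hasFDerivAt.comp x hH
  simpa using second_derivative_symmetric_of_eventually hf hdual v w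

end Hessian

section Descent

variable {E : Type*} [NormedAddCommGroup E] [InnerProductSpace ℝ E]

theorem inner_apply_add_sub_le_of_orthogonal {T : E →L[ℝ] E} {u w : E} {δ : ℝ}
    (hT : ⟪T u, w⟫ = ⟪T w, u⟫) (hu : δ * ‖u‖ ^ 2 ≤ ⟪T u, u⟫) (hw : ⟪T w, w⟫ ≤ -(δ * ‖w‖ ^ 2))
    (huw : ⟪u, w⟫ = 0) :
    ⟪T (u + w), w - u⟫ ≤ -(δ * ‖u + w‖ ^ 2) := by
  have hexpand : ⟪T (u + w), w - u⟫ = ⟪T w, w⟫ - ⟪T u, u⟫ := by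
    rw [map_add, inner_add_left, inner_sub_right, inner_sub_right, hT]
    ring
  rw [hexpand, norm_add_sq_real, huw]
  linarith

theorem half_sq_norm_le_of_smooth_step {a b d G : E} {δ L : ℝ} (hδ : 0 ≤ δ) (hL : 0 < L)
    (hsmooth : 1 / 2 * ‖b‖ ^ 2 ≤ 1 / 2 * ‖a‖ ^ 2 + ⟪G, (δ / L) • d⟫ + L / 2 * ‖(δ / L) • d‖ ^ 2)
    (hdesc : ⟪G, d⟫ ≤ -(δ * ‖a‖ ^ 2)) (hd : ‖d‖ = ‖a‖) :
    1 / 2 * ‖b‖ ^ 2 ≤ (1 - δ ^ 2 / L) * (1 / 2 * ‖a‖ ^ 2) := by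
  have hη : 0 ≤ δ / L := div_nonneg hδ hL.le
  calc 1 / 2 * ‖b‖ ^ 2
      ≤ 1 / 2 * ‖a‖ ^ 2 + δ / L * ⟪G, d⟫ + L / 2 * ((δ / L) ^ 2 * ‖a‖ ^ 2) := by
        rwa [inner_smul_right, norm_smul, Real.norm_of_nonneg hη, mul_pow, hd] at hsmooth
    _ ≤ 1 / 2 * ‖a‖ ^ 2 + δ / L * -(δ * ‖a‖ ^ 2) + L / 2 * ((δ / L) ^ 2 * ‖a‖ ^ 2) := by
        gcongr
    _ = (1 - δ ^ 2 / L) * (1 / 2 * ‖a‖ ^ 2) := by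
        field_simp
        ring

end Descent

theorem le_pow_mul_of_succ_le_mul {a : ℕ → ℝ} {r : ℝ} (ha : ∀ t, 0 ≤ a t)
    (h : ∀ t, a (t + 1) ≤ r * a t) (t : ℕ) : a t ≤ r ^ t * a 0 := by
  rcases le_or_gt 0 r with hr | hr
  · exact le_geom hr t fun k _ => h k
  · -- a negative ratio forces every term to vanish
    have hzero : a t = 0 :=
      le_antisymm (nonpos_of_mul_nonneg_right ((ha (t + 1)).trans (h t)) hr) (ha t)
    have hzero0 : a 0 = 0 :=
      le_antisymm (nonpos_of_mul_nonneg_right ((ha 1).trans (h 0)) hr) (ha 0)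
    simp [hzero, hzero0]

namespace EuclideanSpace

variable {ι κ : Type*}

noncomputable def projInl (v : EuclideanSpace ℝ (ι ⊕ κ)) : EuclideanSpace ℝ (ι ⊕ κ) :=
  WithLp.toLp 2 (Sum.elim (fun i => v (Sum.inl i)) 0)

noncomputable def projInr (v : EuclideanSpace ℝ (ι ⊕ κ)) : EuclideanSpace ℝ (ι ⊕ κ) :=
  WithLp.toLp 2 (Sum.elim 0 (fun j => v (Sum.inr j)))

noncomputable def negInl (v : EuclideanSpace ℝ (ι ⊕ κ)) : EuclideanSpace ℝ (ι ⊕ κ) :=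
  (EuclideanSpace.equiv (ι ⊕ κ) ℝ).symm
    (Sum.elim (fun i => -(v (Sum.inl i))) (fun j => v (Sum.inr j)))

@[simp] theorem projInl_inr (v : EuclideanSpace ℝ (ι ⊕ κ)) (j : κ) :
    projInl v (Sum.inr j) = 0 := rfl

@[simp] theorem projInr_inl (v : EuclideanSpace ℝ (ι ⊕ κ)) (i : ι) :
    projInr v (Sum.inl i) = 0 := rfl

theorem projInl_add_projInr (v : EuclideanSpace ℝ (ι ⊕ κ)) : projInl v + projInr v = v := by
  ext (i | j) <;> simp [projInl, projInr]

theorem negInl_eq_projInr_sub_projInl (v : EuclideanSpace ℝ (ι ⊕ κ)) :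
    negInl v = projInr v - projInl v := by
  ext (i | j) <;> simp [negInl, projInl, projInr]

theorem inner_projInl_projInr [Fintype ι] [Fintype κ] (v w : EuclideanSpace ℝ (ι ⊕ κ)) :
    ⟪projInl v, projInr w⟫ = 0 := by
  simp [PiLp.inner_apply, Fintype.sum_sum_type, projInl, projInr]

theorem norm_negInl [Fintype ι] [Fintype κ] (v : EuclideanSpace ℝ (ι ⊕ κ)) :
    ‖negInl v‖ = ‖v‖ := by
  have horth := inner_projInl_projInr v v
  have hsq : ‖projInr v - projInl v‖ * ‖projInr v - projInl v‖
      = ‖projInl v + projInr v‖ * ‖projInl v + projInr v‖ := by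
    rw [norm_sub_sq_eq_norm_sq_add_norm_sq_real (by rwa [real_inner_comm]),
      norm_add_sq_eq_norm_sq_add_norm_sq_real horth, add_comm]
  rw [projInl_add_projInr, ← negInl_eq_projInr_sub_projInl] at hsq
  exact (mul_self_inj_of_nonneg (norm_nonneg _) (norm_nonneg _)).1 hsq

theorem inner_apply_negInl_le [Fintype ι] [Fintype κ]
    {T : EuclideanSpace ℝ (ι ⊕ κ) →L[ℝ] EuclideanSpace ℝ (ι ⊕ κ)} {δ : ℝ} (hT : ∀ v w, ⟪T v, w⟫ = ⟪T w, v⟫)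
    (hθ : ∀ v : EuclideanSpace ℝ (ι ⊕ κ), (∀ j, v (Sum.inr j) = 0) → δ * ‖v‖ ^ 2 ≤ ⟪T v, v⟫)
    (hω : ∀ v : EuclideanSpace ℝ (ι ⊕ κ), (∀ i, v (Sum.inl i) = 0) → ⟪T v, v⟫ ≤ -(δ * ‖v‖ ^ 2))
    (v : EuclideanSpace ℝ (ι ⊕ κ)) :
    ⟪T v, negInl v⟫ ≤ -(δ * ‖v‖ ^ 2) := by
  have h := inner_apply_add_sub_le_of_orthogonal (hT _ _) (hθ _ (projInl_inr v))
    (hω _ (projInr_inl v)) (inner_projInl_projInr v v)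
  rwa [projInl_add_projInr, ← negInl_eq_projInr_sub_projInl] at h

end EuclideanSpace

theorem single_step_gradient_geometric_convergence_general (n m : ℕ)
    (F : EuclideanSpace ℝ (Fin n ⊕ Fin m) → ℝ)
    (U : Set (EuclideanSpace ℝ (Fin n ⊕ Fin m))) (hU : IsOpen U)
    (g : EuclideanSpace ℝ (Fin n ⊕ Fin m) → EuclideanSpace ℝ (Fin n ⊕ Fin m))
    (H : EuclideanSpace ℝ (Fin n ⊕ Fin m) →
      (EuclideanSpace ℝ (Fin n ⊕ Fin m) →L[ℝ] EuclideanSpace ℝ (Fin n ⊕ Fin m)))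
    (δ L : ℝ) (hδ : 0 < δ) (hL : 0 < L)
    (hg : ∀ π ∈ U, HasGradientAt F (g π) π)
    (hH : ∀ π ∈ U, HasFDerivAt g (H π) π)
    (hθ : ∀ π ∈ U, ∀ v : EuclideanSpace ℝ (Fin n ⊕ Fin m),
      (∀ i : Fin m, v (Sum.inr i) = 0) → δ * ‖v‖ ^ 2 ≤ ⟪H π v, v⟫)
    (hω : ∀ π ∈ U, ∀ v : EuclideanSpace ℝ (Fin n ⊕ Fin m),
      (∀ i : Fin n, v (Sum.inl i) = 0) → ⟪H π v, v⟫ ≤ -(δ * ‖v‖ ^ 2))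
    (hsmooth : ∀ π ∈ U, ∀ π' ∈ U,
      (1 : ℝ) / 2 * ‖g π'‖ ^ 2
        ≤ 1 / 2 * ‖g π‖ ^ 2 + ⟪H π (g π), π' - π⟫ + L / 2 * ‖π' - π‖ ^ 2)
    (seq : ℕ → EuclideanSpace ℝ (Fin n ⊕ Fin m))
    (hmem : ∀ t : ℕ, seq t ∈ U)
    (hstep : ∀ t : ℕ, seq (t + 1) = seq t + (δ / L) •
      (EuclideanSpace.equiv (Fin n ⊕ Fin m) ℝ).symm
        (Sum.elim (fun i => -(g (seq t) (Sum.inl i))) (fun i => g (seq t) (Sum.inr i)))) :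
    ∀ t : ℕ, (1 : ℝ) / 2 * ‖g (seq t)‖ ^ 2
      ≤ (1 - δ ^ 2 / (2 * L)) ^ t * ((1 : ℝ) / 2 * ‖g (seq 0)‖ ^ 2) := by
  have hsymm : ∀ π ∈ U, ∀ v w, ⟪H π v, w⟫ = ⟪H π w, v⟫ := fun π hπ =>
    inner_hessian_comm_of_hasGradientAt
      (eventually_of_mem (hU.mem_nhds hπ) hg) (hH π hπ)
  have hcontract : ∀ t, (1 : ℝ) / 2 * ‖g (seq (t + 1))‖ ^ 2
      ≤ (1 - δ ^ 2 / (2 * L)) * ((1 : ℝ) / 2 * ‖g (seq t)‖ ^ 2) := by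
    intro t
    have hdiff : seq (t + 1) - seq t = (δ / L) • EuclideanSpace.negInl (g (seq t)) := by
      rw [hstep t, add_sub_cancel_left]; rfl
    have hsm := hsmooth _ (hmem t) _ (hmem (t + 1))
    rw [hdiff] at hsm
    have hdesc := EuclideanSpace.inner_apply_negInl_le (hsymm _ (hmem t)) (hθ _ (hmem t))
      (hω _ (hmem t)) (g (seq t))
    refine (half_sq_norm_le_of_smooth_step hδ.le hL hsm hdesc
      (EuclideanSpace.norm_negInl _)).trans ?_
    gcongr
    linarith
  exact le_pow_mul_of_succ_le_mul (fun t => by positivity) hcontract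

/-- Geometric convergence of the single-step gradient method near a saddle point: under
the saddle conditions (`F` is `C²` on a convex neighborhood `U` of `πs` with
`∇F(πs) = 0`, `∇²_θ F ⪰ δ I`, `∇²_ω F ⪯ -δ I`), if additionally `J = ½‖∇F‖²` satisfies
the smoothness bound `J(π') ≤ J(π) + ⟨∇J(π), π' - π⟩ + (L/2)‖π' - π‖²` on `U` (with
`∇J = ∇²F ∇F`), `0 < δ ≤ L`, then the iteration `π^{t+1} = π^t + η ∇̃F(π^t)` with step
size `η = δ/L` (whose iterates remain in `U`) satisfies
`J(π^t) ≤ (1 - δ²/(2L))^t J(π^0)`. -/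
theorem single_step_gradient_geometric_convergence (n m : ℕ)
    (F : EuclideanSpace ℝ (Fin n ⊕ Fin m) → ℝ)
    (U : Set (EuclideanSpace ℝ (Fin n ⊕ Fin m))) (hU : IsOpen U) (hUc : Convex ℝ U)
    (g : EuclideanSpace ℝ (Fin n ⊕ Fin m) → EuclideanSpace ℝ (Fin n ⊕ Fin m))
    (H : EuclideanSpace ℝ (Fin n ⊕ Fin m) →
      (EuclideanSpace ℝ (Fin n ⊕ Fin m) →L[ℝ] EuclideanSpace ℝ (Fin n ⊕ Fin m)))
    (δ L : ℝ) (hδ : 0 < δ) (hL : 0 < L) (hδL : δ ≤ L)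
    (hF : ContDiffOn ℝ 2 F U)
    (hg : ∀ π ∈ U, HasGradientAt F (g π) π)
    (hH : ∀ π ∈ U, HasFDerivAt g (H π) π)
    (πs : EuclideanSpace ℝ (Fin n ⊕ Fin m)) (hπs : πs ∈ U) (hcrit : g πs = 0)
    (hθ : ∀ π ∈ U, ∀ v : EuclideanSpace ℝ (Fin n ⊕ Fin m),
      (∀ i : Fin m, v (Sum.inr i) = 0) → δ * ‖v‖ ^ 2 ≤ ⟪H π v, v⟫)
    (hω : ∀ π ∈ U, ∀ v : EuclideanSpace ℝ (Fin n ⊕ Fin m),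
      (∀ i : Fin n, v (Sum.inl i) = 0) → ⟪H π v, v⟫ ≤ -(δ * ‖v‖ ^ 2))
    (hsmooth : ∀ π ∈ U, ∀ π' ∈ U,
      (1 : ℝ) / 2 * ‖g π'‖ ^ 2
        ≤ 1 / 2 * ‖g π‖ ^ 2 + ⟪H π (g π), π' - π⟫ + L / 2 * ‖π' - π‖ ^ 2)
    (seq : ℕ → EuclideanSpace ℝ (Fin n ⊕ Fin m))
    (hmem : ∀ t : ℕ, seq t ∈ U)
    (hstep : ∀ t : ℕ, seq (t + 1) = seq t + (δ / L) •
      (EuclideanSpace.equiv (Fin n ⊕ Fin m) ℝ).symm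
        (Sum.elim (fun i => -(g (seq t) (Sum.inl i))) (fun i => g (seq t) (Sum.inr i)))) :
    ∀ t : ℕ, (1 : ℝ) / 2 * ‖g (seq t)‖ ^ 2
      ≤ (1 - δ ^ 2 / (2 * L)) ^ t * ((1 : ℝ) / 2 * ‖g (seq 0)‖ ^ 2) :=
  single_step_gradient_geometric_convergence_general n m F U hU g H δ L hδ hL hg hH hθ hω hsmooth
    seq hmem hstep
end

section
/- Let f(u) = π u log u − (1 − π + π u) log(1 − π + π u) for u > 0, where π ∈ (0, 1). Then the Fenchel conjugate is f*(t) = (1 − π) log((1 − π)/(1 − π e^{t/π})) for t < −π log π, and f*(t) = +∞ for t ≥ −π log π. -/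
private lemma log_decomp {x y z : ℝ} (hx : 0 < x) (hy : 0 < y) (hz : 0 < z) :
    Real.log (x * y / z) = Real.log x + Real.log y - Real.log z := by
  rw [Real.log_div (by positivity) hz.ne', Real.log_mul hx.ne' hy.ne']

/-- The Fenchel conjugate of the weighted Jensen-Shannon generator
`f(u) = π u log u - (1 - π + π u) log (1 - π + π u)` (over `u > 0`), for `π ∈ (0,1)`,
is `f*(t) = (1-π) log ((1-π)/(1 - π e^{t/π}))` for `t < -π log π` and `+∞` otherwise. -/
theorem fenchel_conjugate_weighted_JS (w t : ℝ) (hw : w ∈ Set.Ioo (0 : ℝ) 1) :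
    (t < -(w * Real.log w) → IsLUB
      {x : ℝ | ∃ u : ℝ, 0 < u ∧
        x = u * t - (w * u * Real.log u - (1 - w + w * u) * Real.log (1 - w + w * u))}
      ((1 - w) * Real.log ((1 - w) / (1 - w * Real.exp (t / w))))) ∧
    (-(w * Real.log w) ≤ t → ¬ BddAbove
      {x : ℝ | ∃ u : ℝ, 0 < u ∧
        x = u * t - (w * u * Real.log u - (1 - w + w * u) * Real.log (1 - w + w * u))}) := by
  obtain ⟨hw0, hw1⟩ := hw
  have hw1' : 0 < 1 - w := by linarith
  set s := Real.exp (t / w) with hsdef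
  have hs0 : 0 < s := Real.exp_pos _
  have hlogs : Real.log s = t / w := Real.log_exp _
  constructor
  · intro ht
    have hws : w * s < 1 := by
      have h1 : t / w < -Real.log w := by rw [div_lt_iff₀ hw0]; nlinarith
      have h2 : s < w⁻¹ := by
        rw [hsdef]
        calc Real.exp (t / w) < Real.exp (-Real.log w) := Real.exp_lt_exp.mpr h1
          _ = w⁻¹ := by rw [Real.exp_neg, Real.exp_log hw0]
      have h3 := mul_lt_mul_of_pos_left h2 hw0
      rwa [mul_inv_cancel₀ hw0.ne'] at h3
    have hws' : 0 < 1 - w * s := by linarith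
    have hRlog : Real.log ((1 - w) / (1 - w * s)) =
        Real.log (1 - w) - Real.log (1 - w * s) := Real.log_div hw1'.ne' hws'.ne'
    -- upper bound
    have hub : ∀ u : ℝ, 0 < u →
        u * t - (w * u * Real.log u - (1 - w + w * u) * Real.log (1 - w + w * u)) ≤
          (1 - w) * Real.log ((1 - w) / (1 - w * s)) := by
      intro u hu
      have hA : 0 < 1 - w + w * u := by nlinarith
      have h1 : Real.log (s * (1 - w + w * u) / u) ≤ s * (1 - w + w * u) / u - 1 :=
        Real.log_le_sub_one_of_pos (by positivity)
      rw [log_decomp hs0 hA hu] at h1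
      have h2 : Real.log ((1 - w + w * u) * (1 - w * s) / (1 - w)) ≤
          (1 - w + w * u) * (1 - w * s) / (1 - w) - 1 :=
        Real.log_le_sub_one_of_pos (by positivity)
      rw [log_decomp hA hws' hw1'] at h2
      have hut : u * t = w * u * Real.log s := by rw [hlogs]; field_simp
      have h1m : w * u * (Real.log s + Real.log (1 - w + w * u) - Real.log u) ≤
          w * s * (1 - w + w * u) - w * u := by
        have := mul_le_mul_of_nonneg_left h1 (by positivity : (0:ℝ) ≤ w * u)
        have heq : w * u * (s * (1 - w + w * u) / u - 1) = w * s * (1 - w + w * u) - w * u := by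
          field_simp
        linarith
      have h2m : (1 - w) * (Real.log (1 - w + w * u) + Real.log (1 - w * s) -
          Real.log (1 - w)) ≤ (1 - w + w * u) * (1 - w * s) - (1 - w) := by
        have := mul_le_mul_of_nonneg_left h2 hw1'.le
        have heq : (1 - w) * ((1 - w + w * u) * (1 - w * s) / (1 - w) - 1) =
            (1 - w + w * u) * (1 - w * s) - (1 - w) := by field_simp
        linarith
      rw [hRlog]
      nlinarith [h1m, h2m]
    constructor
    · rintro x ⟨u, hu, rfl⟩
      exact hub u hu
    · intro b hb
      -- the sup is attained at u* = (1-w) s / (1 - w s)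
      set u₀ : ℝ := (1 - w) * s / (1 - w * s) with hu₀def
      have hu₀ : 0 < u₀ := by positivity
      refine hb ⟨u₀, hu₀, ?_⟩
      have hA₀ : 1 - w + w * u₀ = (1 - w) / (1 - w * s) := by
        rw [hu₀def]; field_simp; ring
      have hlogu₀ : Real.log u₀ = Real.log (1 - w) + Real.log s - Real.log (1 - w * s) :=
        log_decomp hw1' hs0 hws'
      have hut : u₀ * t = w * u₀ * Real.log s := by rw [hlogs]; field_simp
      rw [hA₀, hRlog, hlogu₀, hut]
      have : w * u₀ = w * (1 - w) * s / (1 - w * s) := by rw [hu₀def]; ring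
      rw [this]
      field_simp
      ring
  · intro ht
    rintro ⟨b, hb⟩
    have hws1 : 1 ≤ w * s := by
      have h1 : -Real.log w ≤ t / w := by rw [le_div_iff₀ hw0]; nlinarith
      have h2 : w⁻¹ ≤ s := by
        rw [hsdef]
        calc w⁻¹ = Real.exp (-Real.log w) := by rw [Real.exp_neg, Real.exp_log hw0]
          _ ≤ Real.exp (t / w) := Real.exp_le_exp.mpr h1
      have h3 := mul_le_mul_of_nonneg_left h2 hw0.le
      rwa [mul_inv_cancel₀ hw0.ne'] at h3
    set u : ℝ := Real.exp ((|b| + 1) / (1 - w)) / w with hudef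
    have hu : 0 < u := by positivity
    have hwu : w * u = Real.exp ((|b| + 1) / (1 - w)) := by
      rw [hudef, mul_div_cancel₀ _ hw0.ne']
    have hA : 0 < 1 - w + w * u := by nlinarith
    have hmem := hb ⟨u, hu, rfl⟩
    have hut : u * t = w * u * Real.log s := by rw [hlogs]; field_simp
    -- (1-w) * log(1-w+wu) ≥ |b|+1
    have h3 : (|b| + 1) / (1 - w) ≤ Real.log (1 - w + w * u) := by
      have hlwu : Real.log (w * u) = (|b| + 1) / (1 - w) := by rw [hwu, Real.log_exp]
      calc (|b| + 1) / (1 - w) = Real.log (w * u) := hlwu.symm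
        _ ≤ Real.log (1 - w + w * u) :=
          Real.log_le_log (by positivity) (by nlinarith)
    have hge : |b| + 1 ≤ (1 - w) * Real.log (1 - w + w * u) := by
      have := mul_le_mul_of_nonneg_left h3 hw1'.le
      have heq : (1 - w) * ((|b| + 1) / (1 - w)) = |b| + 1 := by field_simp
      linarith
    -- the first term is nonnegative
    have hpos : 0 ≤ w * u * (Real.log s + Real.log (1 - w + w * u) - Real.log u) := by
      have h4 : 0 ≤ Real.log (s * (1 - w + w * u) / u) := by
        apply Real.log_nonneg
        rw [le_div_iff₀ hu]
        nlinarith [mul_le_mul_of_nonneg_right hws1 hu.le, mul_pos hs0 hw1']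
      rw [log_decomp hs0 hA hu] at h4
      exact mul_nonneg (by positivity) h4
    nlinarith [hmem, hut, hge, hpos, le_abs_self b]
end
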